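/- arXiv:2204.02048 — 5 statements merged into one kernel-verified Lean document; each statement's English description precedes it below -/
import Mathlib

section
/- Let L be an irreducible simply-laced root lattice that is not of type A₁ (i.e. of rank at least 2), with Weyl group W, and let N_L denote the image of the natural map L/2L → L^∨/2L^∨ induced by the bilinear form. Then N_L is an irreducible 𝔽₂[W]-module; in particular N_L has no nonzero proper W-stable 𝔽₂-subspace, and every W-equivariant 𝔽₂-linear automorphism of N_L is the identity. -/
/-- `w : L ≃ₗ[ℤ] L` is the reflection `x ↦ x - ⟨x,α⟩ α` in a root `α`
(an element with `⟨α,α⟩ = 2`) of the lattice `(L, B)`. -/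
def IsRootReflection {L : Type*} [AddCommGroup L]
    (B : L →ₗ[ℤ] L →ₗ[ℤ] ℤ) (w : L ≃ₗ[ℤ] L) : Prop :=
  ∃ α : L, B α α = 2 ∧ ∀ x : L, w x = x - B x α • α

/-- The Weyl group of the lattice `(L, B)`: the subgroup of automorphisms of `L`
generated by the reflections in the roots. -/
def WeylGroup {L : Type*} [AddCommGroup L]
    (B : L →ₗ[ℤ] L →ₗ[ℤ] ℤ) : Subgroup (L ≃ₗ[ℤ] L) :=
  Subgroup.closure {w | IsRootReflection B w}

/-- The map `L → Hom(L, ℤ/2ℤ)`, `x ↦ (y ↦ ⟨x,y⟩ mod 2)`.  Since for a finite free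
`L` one has `Hom(L,ℤ)/2Hom(L,ℤ) ≅ Hom(L, ℤ/2ℤ)`, its range is exactly
`N_L = image(L/2L → L^∨/2L^∨)`. -/
def modTwoPairing {L : Type*} [AddCommGroup L] (B : L →ₗ[ℤ] L →ₗ[ℤ] ℤ) :
    L →+ (L →+ ZMod 2) where
  toFun x := (Int.castAddHom (ZMod 2)).comp (B x).toAddMonoidHom
  map_zero' := by ext y; simp
  map_add' x y := by ext z; simp

/-- The natural action of an automorphism `w` of `L` on `Hom(L, ℤ/2ℤ)`,
`f ↦ f ∘ w⁻¹`; on `N_L` it corresponds to the natural Weyl group action. -/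
def homAction {L : Type*} [AddCommGroup L] (w : L ≃ₗ[ℤ] L) (f : L →+ ZMod 2) :
    L →+ ZMod 2 :=
  f.comp w.symm.toLinearMap.toAddMonoidHom

section Aux
variable {L : Type*} [AddCommGroup L] (B : L →ₗ[ℤ] L →ₗ[ℤ] ℤ)

/-- The reflection in `α` as a linear map. -/
def NLaux.reflMap (α : L) : L →ₗ[ℤ] L :=
  LinearMap.id - (LinearMap.toSpanSingleton ℤ L α).comp (B.flip α)

lemma NLaux.reflMap_apply (α x : L) : NLaux.reflMap B α x = x - B x α • α := rfl

lemma NLaux.reflMap_invol (α : L) (hα : B α α = 2) (x : L) :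
    NLaux.reflMap B α (NLaux.reflMap B α x) = x := by
  simp only [NLaux.reflMap_apply, map_sub, map_smul, LinearMap.sub_apply, LinearMap.smul_apply, hα,
    smul_eq_mul]
  module

/-- The reflection in a root `α` as a linear equivalence. -/
def NLaux.refl (α : L) (hα : B α α = 2) : L ≃ₗ[ℤ] L :=
  LinearEquiv.ofLinear (NLaux.reflMap B α) (NLaux.reflMap B α)
    (by ext x; exact NLaux.reflMap_invol B α hα x)
    (by ext x; exact NLaux.reflMap_invol B α hα x)

lemma NLaux.refl_apply (α : L) (hα : B α α = 2) (x : L) :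
    NLaux.refl B α hα x = x - B x α • α := rfl

lemma NLaux.refl_symm_apply (α : L) (hα : B α α = 2) (x : L) :
    (NLaux.refl B α hα).symm x = x - B x α • α := rfl

lemma NLaux.refl_mem (α : L) (hα : B α α = 2) : NLaux.refl B α hα ∈ WeylGroup B :=
  Subgroup.subset_closure ⟨α, hα, fun x => rfl⟩

/-- Weyl group elements preserve the form. -/
lemma NLaux.weyl_preserves (hsym : ∀ x y : L, B x y = B y x)
    {w : L ≃ₗ[ℤ] L} (hw : w ∈ WeylGroup B) (x y : L) : B (w x) (w y) = B x y := by
  induction hw using Subgroup.closure_induction generalizing x y with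
  | mem u hu =>
    obtain ⟨α, hα, hu⟩ := hu
    simp only [hu, map_sub, map_smul, LinearMap.sub_apply, LinearMap.smul_apply, smul_eq_mul, hα]
    rw [hsym α y]
    ring
  | one => simp
  | mul u v hu hv ihu ihv => exact (ihu (v x) (v y)).trans (ihv x y)
  | inv u hu ihu =>
    have h1 : ∀ z : L, u ((u⁻¹ : L ≃ₗ[ℤ] L) z) = z := fun z => u.apply_symm_apply z
    have h2 := ihu ((u⁻¹ : L ≃ₗ[ℤ] L) x) ((u⁻¹ : L ≃ₗ[ℤ] L) y)
    rw [h1, h1] at h2; exact h2.symm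


lemma NLaux.mtp_apply (x y : L) : modTwoPairing B x y = ((B x y : ℤ) : ZMod 2) := rfl

lemma NLaux.homAction_apply (w : L ≃ₗ[ℤ] L) (f : L →+ ZMod 2) (y : L) :
    homAction w f y = f (w.symm y) := rfl

lemma NLaux.homAction_pairing (hsym : ∀ x y : L, B x y = B y x)
    {w : L ≃ₗ[ℤ] L} (hw : w ∈ WeylGroup B) (x : L) :
    homAction w (modTwoPairing B x) = modTwoPairing B (w x) := by
  ext y
  have h : B (w x) y = B x (w.symm y) := by
    conv_lhs => rw [← w.apply_symm_apply y]
    exact NLaux.weyl_preserves B hsym hw x (w.symm y)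
  rw [NLaux.homAction_apply, NLaux.mtp_apply, NLaux.mtp_apply, h]

lemma NLaux.root_even_pairing (hsym : ∀ x y : L, B x y = B y x)
    (hpos : ∀ x : L, x ≠ 0 → 0 < B x x) (α β : L) (hα : B α α = 2) (hβ : B β β = 2)
    (hd : 2 ∣ B α β) : B α β = 0 ∨ β = α ∨ β = -α := by
  by_cases h1 : β = α
  · exact Or.inr (Or.inl h1)
  by_cases h2 : β = -α
  · exact Or.inr (Or.inr h2)
  left
  have e1 : B (α - β) (α - β) = 4 - 2 * B α β := by
    simp only [map_sub, LinearMap.sub_apply]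
    rw [hα, hβ, hsym β α]; ring
  have e2 : B (α + β) (α + β) = 4 + 2 * B α β := by
    simp only [map_add, LinearMap.add_apply]
    rw [hα, hβ, hsym β α]; ring
  have p1 : 0 < B (α - β) (α - β) := hpos _ (sub_ne_zero.mpr (fun hc => h1 hc.symm))
  have p2 : 0 < B (α + β) (α + β) := hpos _ (fun hc => h2 (by rw [add_eq_zero_iff_neg_eq] at hc; exact hc.symm))
  rw [e1] at p1; rw [e2] at p2
  omega

lemma NLaux.exists_odd (hsym : ∀ x y : L, B x y = B y x)
    (hpos : ∀ x : L, x ≠ 0 → 0 < B x x)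
    (hspan : Submodule.span ℤ {α : L | B α α = 2} = ⊤)
    (hirr : ¬ ∃ S : Set L, S ⊆ {α : L | B α α = 2} ∧ S.Nonempty ∧
      ({α : L | B α α = 2} \ S).Nonempty ∧
      ∀ α ∈ S, ∀ β ∈ ({α : L | B α α = 2} \ S), B α β = 0)
    (hrank : 2 ≤ Module.finrank ℤ L)
    (α : L) (hα : B α α = 2) : ∃ β, B β β = 2 ∧ ¬ (2 ∣ B α β) := by
  by_contra hcon
  push_neg at hcon
  have hall : ∀ β, B β β = 2 → 2 ∣ B α β := fun β hβ => hcon β hβ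
  apply hirr
  have hneg : B (-α) (-α) = 2 := by simp [hα]
  refine ⟨{α, -α}, ?_, ⟨α, by simp⟩, ?_, ?_⟩
  · intro β hβ
    rcases hβ with h | h
    · simpa [h] using hα
    · simp only [Set.mem_singleton_iff] at h
      simpa [h] using hneg
  · -- Φ \ {α, -α} nonempty, else rank ≤ 1
    by_contra hne
    rw [Set.not_nonempty_iff_eq_empty, Set.diff_eq_empty] at hne
    have htop : (⊤ : Submodule ℤ L) ≤ Submodule.span ℤ {α} := by
      rw [← hspan]
      apply Submodule.span_le.mpr
      intro β hβ
      rcases hne hβ with h | h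
      · rw [h]; exact Submodule.subset_span rfl
      · simp only [Set.mem_singleton_iff] at h
        rw [h]
        exact neg_mem (Submodule.subset_span rfl)
    have hsurj : Function.Surjective (LinearMap.toSpanSingleton ℤ L α) := by
      intro x
      have hx : x ∈ Submodule.span ℤ {α} := htop trivial
      rw [Submodule.mem_span_singleton] at hx
      obtain ⟨c, hc⟩ := hx
      exact ⟨c, hc⟩
    have hr := (LinearMap.toSpanSingleton ℤ L α).lift_rank_le_of_surjective hsurj
    have hf : Module.finrank ℤ L ≤ Module.finrank ℤ ℤ :=
      Module.finrank_le_finrank_of_rank_le_rank hr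
        (by rw [Module.rank_self]; exact Cardinal.one_lt_aleph0)
    rw [Module.finrank_self] at hf
    omega
  · rintro β hβ γ ⟨hγ, hγn⟩
    simp only [Set.mem_insert_iff, Set.mem_singleton_iff] at hβ hγn
    push_neg at hγn
    have h0 : B α γ = 0 := by
      rcases NLaux.root_even_pairing B hsym hpos α γ hα hγ (hall γ hγ) with h | h | h
      · exact h
      · exact absurd h hγn.1
      · exact absurd h hγn.2
    rcases hβ with h | h
    · rw [h]; exact h0
    · rw [h]; simp [h0]


lemma NLaux.cast_eq_one (c : ℤ) (hc : ¬ 2 ∣ c) : (c : ZMod 2) = 1 := by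
  have h0 : (c : ZMod 2) ≠ 0 := by rwa [Ne, ZMod.intCast_zmod_eq_zero_iff_dvd]
  revert h0; generalize (c : ZMod 2) = a; revert a; decide

lemma NLaux.odd_smul (c : ℤ) (hc : ¬ 2 ∣ c) (g : L →+ ZMod 2) : c • g = g := by
  ext y
  show c • g y = g y
  rw [zsmul_eq_mul, NLaux.cast_eq_one c hc, one_mul]

lemma NLaux.even_smul (c : ℤ) (hc : 2 ∣ c) (g : L →+ ZMod 2) : c • g = 0 := by
  ext y
  show c • g y = 0
  rw [zsmul_eq_mul, (ZMod.intCast_zmod_eq_zero_iff_dvd c 2).mpr hc, zero_mul]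

lemma NLaux.mtp_smul (c : ℤ) (x : L) :
    modTwoPairing B (c • x) = c • modTwoPairing B x := by
  ext y
  show ((B (c • x) y : ℤ) : ZMod 2) = c • ((B x y : ℤ) : ZMod 2)
  rw [map_smul, LinearMap.smul_apply, smul_eq_mul, zsmul_eq_mul]
  push_cast
  ring

end Aux

set_option synthInstance.maxHeartbeats 1000000 in
/-- For an irreducible simply-laced root lattice not of type `A₁`,
`N_L = image(L/2L → L^∨/2L^∨)` is an irreducible `𝔽₂[W]`-module:
it is nonzero, it has no nonzero proper `W`-stable subspace, and every
`W`-equivariant automorphism of `N_L` is the identity. -/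
theorem NL_irreducible_F2_Weyl_module
    (L : Type*) [AddCommGroup L] [Module.Free ℤ L] [Module.Finite ℤ L]
    (B : L →ₗ[ℤ] L →ₗ[ℤ] ℤ)
    (hsym : ∀ x y : L, B x y = B y x)
    (hpos : ∀ x : L, x ≠ 0 → 0 < B x x)
    (heven : ∀ x : L, 2 ∣ B x x)
    (hspan : Submodule.span ℤ {α : L | B α α = 2} = ⊤)
    (hirr : ¬ ∃ S : Set L, S ⊆ {α : L | B α α = 2} ∧ S.Nonempty ∧
      ({α : L | B α α = 2} \ S).Nonempty ∧
      ∀ α ∈ S, ∀ β ∈ ({α : L | B α α = 2} \ S), B α β = 0)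
    (hrank : 2 ≤ Module.finrank ℤ L) :
    (modTwoPairing B).range ≠ ⊥ ∧
    (∀ S : AddSubgroup (L →+ ZMod 2), S ≤ (modTwoPairing B).range →
      (∀ w ∈ WeylGroup B, ∀ f ∈ S, homAction w f ∈ S) →
      S = ⊥ ∨ S = (modTwoPairing B).range) ∧
    (∀ σ : ((modTwoPairing B).range) ≃+ ((modTwoPairing B).range),
      (∀ w ∈ WeylGroup B, ∀ f g : ((modTwoPairing B).range),
        homAction w (f : L →+ ZMod 2) = (g : L →+ ZMod 2) →
        homAction w ((σ f : L →+ ZMod 2)) = ((σ g : L →+ ZMod 2))) →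
      ∀ f, σ f = f) := by
  classical
  have hΦne : ∃ α : L, B α α = 2 := by
    by_contra h
    push_neg at h
    have hempty : {α : L | B α α = 2} = ∅ := by
      ext z; simp [h z]
    rw [hempty, Submodule.span_empty] at hspan
    have hall0 : ∀ a : L, a = 0 := fun a =>
      (Submodule.mem_bot ℤ).mp (by rw [hspan]; trivial)
    have : Module.finrank ℤ L = 0 := by
      have : Subsingleton L := ⟨fun a b => by rw [hall0 a, hall0 b]⟩
      exact Module.finrank_zero_of_subsingleton
    omega
  obtain ⟨α₀, hα₀⟩ := hΦne
  have hProotne : ∀ α : L, B α α = 2 → modTwoPairing B α ≠ 0 := by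
    intro α hα h0
    obtain ⟨β, hβ, hodd⟩ := NLaux.exists_odd B hsym hpos hspan hirr hrank α hα
    apply hodd
    have := congrArg (fun g : L →+ ZMod 2 => g β) h0
    exact (ZMod.intCast_zmod_eq_zero_iff_dvd _ 2).mp this
  refine ⟨?_, ?_, ?_⟩
  · -- nonzero
    intro h
    have hm : modTwoPairing B α₀ ∈ (modTwoPairing B).range := ⟨α₀, rfl⟩
    rw [h] at hm
    exact hProotne α₀ hα₀ (AddSubgroup.mem_bot.mp hm)
  · -- no proper stable subgroup
    intro S hSR hstab
    by_cases hbot : S = ⊥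
    · exact Or.inl hbot
    right
    have hex : ∃ f ∈ S, f ≠ 0 := by
      by_contra h
      push_neg at h
      exact hbot ((AddSubgroup.eq_bot_iff_forall S).mpr h)
    obtain ⟨f, hfS, hf0⟩ := hex
    obtain ⟨x, hx⟩ := hSR hfS
    have hrootodd : ∃ α, B α α = 2 ∧ ¬ (2 ∣ B x α) := by
      by_contra h
      push_neg at h
      apply hf0
      rw [← hx]
      ext y
      show ((B x y : ℤ) : ZMod 2) = 0
      have hy : y ∈ Submodule.span ℤ {α : L | B α α = 2} := by rw [hspan]; trivial
      induction hy using Submodule.span_induction with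
      | mem z hz => exact (ZMod.intCast_zmod_eq_zero_iff_dvd _ 2).mpr (h z hz)
      | zero => simp
      | add a b _ _ iha ihb => rw [map_add]; push_cast; rw [iha, ihb]; ring
      | smul c a _ iha =>
          rw [map_smul, smul_eq_mul]
          push_cast
          rw [iha, mul_zero]
    obtain ⟨α, hα, hxα⟩ := hrootodd
    have key : ∀ γ δ : L, B γ γ = 2 → B δ δ = 2 → ¬ 2 ∣ B γ δ →
        modTwoPairing B γ ∈ S → modTwoPairing B δ ∈ S := by
      intro γ δ hγ hδ hoddp hmem
      have hw := hstab _ (NLaux.refl_mem B δ hδ) _ hmem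
      rw [NLaux.homAction_pairing B hsym (NLaux.refl_mem B δ hδ), NLaux.refl_apply,
        map_sub, NLaux.mtp_smul, NLaux.odd_smul _ hoddp] at hw
      have := AddSubgroup.sub_mem S hmem hw
      simpa using this
    have hαS : modTwoPairing B α ∈ S := by
      have hfS' : modTwoPairing B x ∈ S := by rw [hx]; exact hfS
      have hw := hstab _ (NLaux.refl_mem B α hα) _ hfS'
      rw [NLaux.homAction_pairing B hsym (NLaux.refl_mem B α hα), NLaux.refl_apply,
        map_sub, NLaux.mtp_smul, NLaux.odd_smul _ hxα] at hw
      have := AddSubgroup.sub_mem S hfS' hw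
      simpa using this
    have hallS : ∀ β, B β β = 2 → modTwoPairing B β ∈ S := by
      by_contra h
      push_neg at h
      obtain ⟨β, hβ, hβS⟩ := h
      apply hirr
      refine ⟨{γ | B γ γ = 2 ∧ modTwoPairing B γ ∈ S}, fun γ hγ => hγ.1,
        ⟨α, hα, hαS⟩, ⟨β, hβ, fun hc => hβS hc.2⟩, ?_⟩
      rintro γ ⟨hγ, hγS⟩ δ ⟨hδ, hδn⟩
      by_contra hBne
      apply hδn
      refine ⟨hδ, ?_⟩
      by_cases hodd2 : 2 ∣ B γ δ
      · rcases NLaux.root_even_pairing B hsym hpos γ δ hγ hδ hodd2 with h0 | h1 | h1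
        · exact absurd h0 hBne
        · rw [h1]; exact hγS
        · rw [h1, map_neg]; exact AddSubgroup.neg_mem S hγS
      · exact key γ δ hγ hδ hodd2 hγS
    apply le_antisymm hSR
    rintro g ⟨z, rfl⟩
    have hz : z ∈ Submodule.span ℤ {α : L | B α α = 2} := by rw [hspan]; trivial
    induction hz using Submodule.span_induction with
    | mem u hu => exact hallS u hu
    | zero => rw [map_zero]; exact zero_mem S
    | add a b _ _ iha ihb => rw [map_add]; exact add_mem iha ihb
    | smul c a _ iha => rw [NLaux.mtp_smul]; exact AddSubgroup.zsmul_mem S iha c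
  · -- equivariant automorphisms are trivial
    intro σ hσ
    have hfix : ∀ α : L, ∀ hα : B α α = 2,
        σ ⟨modTwoPairing B α, ⟨α, rfl⟩⟩ = ⟨modTwoPairing B α, ⟨α, rfl⟩⟩ := by
      intro α hα
      obtain ⟨β, hβ, hoddp⟩ := NLaux.exists_odd B hsym hpos hspan hirr hrank α hα
      have hoddβα : ¬ (2 ∣ B β α) := by rw [hsym β α]; exact hoddp
      have hwmem := NLaux.refl_mem B α hα
      set w := NLaux.refl B α hα with hwdef
      set fβ : ((modTwoPairing B).range) := ⟨modTwoPairing B β, ⟨β, rfl⟩⟩ with hfβ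
      set fα : ((modTwoPairing B).range) := ⟨modTwoPairing B α, ⟨α, rfl⟩⟩ with hfα
      have heq : homAction w (fβ : L →+ ZMod 2) =
          ((fβ - fα : ((modTwoPairing B).range)) : L →+ ZMod 2) := by
        show homAction w (modTwoPairing B β) = modTwoPairing B β - modTwoPairing B α
        rw [NLaux.homAction_pairing B hsym hwmem, NLaux.refl_apply, map_sub,
          NLaux.mtp_smul, NLaux.odd_smul _ hoddβα]
      have happ := hσ w hwmem fβ (fβ - fα) heq
      obtain ⟨y, hy⟩ := (σ fβ).2
      rw [map_sub σ] at happ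
      have hcoe : ((σ fβ - σ fα : ((modTwoPairing B).range)) : L →+ ZMod 2) =
          (σ fβ : L →+ ZMod 2) - (σ fα : L →+ ZMod 2) := rfl
      rw [hcoe, ← hy, NLaux.homAction_pairing B hsym hwmem, NLaux.refl_apply, map_sub,
        NLaux.mtp_smul] at happ
      have hres : ((σ fα : L →+ ZMod 2)) = (B y α) • modTwoPairing B α :=
        (sub_right_injective happ).symm
      by_cases hyodd : 2 ∣ B y α
      · exfalso
        rw [NLaux.even_smul _ hyodd] at hres
        have h1 : σ fα = 0 := Subtype.ext hres
        have h2 : fα = 0 := σ.injective (by rw [h1, map_zero])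
        exact hProotne α hα (congrArg Subtype.val h2)
      · rw [NLaux.odd_smul _ hyodd] at hres
        exact Subtype.ext hres
    have hgen : ∀ z : L, σ ⟨modTwoPairing B z, ⟨z, rfl⟩⟩ = ⟨modTwoPairing B z, ⟨z, rfl⟩⟩ := by
      intro z
      have hz : z ∈ Submodule.span ℤ {α : L | B α α = 2} := by rw [hspan]; trivial
      induction hz using Submodule.span_induction with
      | mem u hu => exact hfix u hu
      | zero =>
          have h0 : (⟨modTwoPairing B 0, ⟨0, rfl⟩⟩ : ((modTwoPairing B).range)) = 0 :=
            Subtype.ext (map_zero _)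
          rw [h0, map_zero]
      | add a b _ _ iha ihb =>
          have hab : (⟨modTwoPairing B (a + b), ⟨a + b, rfl⟩⟩ : ((modTwoPairing B).range)) =
              ⟨modTwoPairing B a, ⟨a, rfl⟩⟩ + ⟨modTwoPairing B b, ⟨b, rfl⟩⟩ :=
            Subtype.ext (map_add _ a b)
          rw [hab, map_add, iha, ihb]
      | smul c a _ iha =>
          have hca : (⟨modTwoPairing B (c • a), ⟨c • a, rfl⟩⟩ : ((modTwoPairing B).range)) =
              c • ⟨modTwoPairing B a, ⟨a, rfl⟩⟩ :=
            Subtype.ext (NLaux.mtp_smul B c a)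
          rw [hca, map_zsmul, iha]
    intro f
    obtain ⟨z, hz⟩ := f.2
    have hf : f = ⟨modTwoPairing B z, ⟨z, rfl⟩⟩ := Subtype.ext hz.symm
    rw [hf]
    exact hgen z
end

section
/- Let L be an irreducible simply-laced root lattice that is not of type A₁, with Weyl group W, and let N_L = image(L/2L → L^∨/2L^∨). Then there exists an element w ∈ W whose only fixed point on N_L is 0, i.e. N_L^w = 0. -/
/-!
Add the roots of a finite generating set one at a time, multiplying `w` by the reflection `s_α`
exactly when the image of `α` in `N_L` is independent of the images collected so far. Since
`s_α` changes the image of `x` by `⟨x, α⟩` times the image of `α`, this independence forces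
`⟨x, α⟩` to be even whenever `x` is fixed on `N_L`; a skipped root pairs evenly with a fixed `x`
because its image is a combination of the earlier ones. So a fixed `x` pairs evenly with a
generating set of `L`, i.e. its image in `N_L` vanishes.
-/
open Submodule

section

variable {L : Type*} [AddCommGroup L] (B : L →ₗ[ℤ] L →ₗ[ℤ] ℤ)

@[simp] lemma modTwoPairing_apply (x y : L) : modTwoPairing B x y = (B x y : ZMod 2) := rfl

def rootReflection {α : L} (hα : B α α = 2) : L ≃ₗ[ℤ] L :=
  LinearEquiv.ofInvolutive (LinearMap.id - (B.flip α).smulRight α) fun x => by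
    simp only [LinearMap.sub_apply, LinearMap.id_apply, LinearMap.smulRight_apply,
      LinearMap.flip_apply, map_sub, map_smul, hα]
    module

variable {B}

lemma rootReflection_apply {α : L} (hα : B α α = 2) (x : L) :
    rootReflection B hα x = x - B x α • α := rfl

lemma rootReflection_mem_weylGroup {α : L} (hα : B α α = 2) :
    rootReflection B hα ∈ WeylGroup B :=
  Subgroup.subset_closure ⟨α, hα, fun _ => rfl⟩

lemma modTwoPairing_rootReflection {α : L} (hα : B α α = 2) (x : L) :
    modTwoPairing B (rootReflection B hα x) =
      modTwoPairing B x - (B x α : ZMod 2) • modTwoPairing B α := by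
  ext y
  simp [rootReflection_apply]

lemma modTwoPairing_mem_span_image {T : Set L} {y : L} (hy : y ∈ span ℤ T) :
    modTwoPairing B y ∈ span (ZMod 2) (modTwoPairing B '' T) := by
  have := mem_map_of_mem (f := (modTwoPairing B).toIntLinearMap) hy
  rw [map_span] at this
  exact span_le_restrictScalars ℤ (ZMod 2) _ this

theorem exists_mem_weylGroup_annihilates_fixed_points (hsym : ∀ x y : L, B x y = B y x)
    (T : Finset L) (hT : ∀ α ∈ T, B α α = 2) :
    ∃ w ∈ WeylGroup B,
      (∀ x, modTwoPairing B (w x) - modTwoPairing B x ∈ span (ZMod 2) (modTwoPairing B '' T)) ∧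
      ∀ x, modTwoPairing B (w x) = modTwoPairing B x →
        ∀ f ∈ span (ZMod 2) (modTwoPairing B '' T), f x = 0 := by
  classical
  induction T using Finset.induction_on with
  | empty => exact ⟨1, one_mem _, by simp, by simp⟩
  | insert α T _ ih =>
    obtain ⟨w, hw, hmove, hfix⟩ := ih fun β hβ => hT β (Finset.mem_insert_of_mem hβ)
    have hα : B α α = 2 := hT α (Finset.mem_insert_self α T)
    rw [Finset.coe_insert, Set.image_insert_eq]
    by_cases hdep : modTwoPairing B α ∈ span (ZMod 2) (modTwoPairing B '' T)
    · rw [span_insert_eq_span hdep]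
      exact ⟨w, hw, hmove, hfix⟩
    refine ⟨rootReflection B hα * w, mul_mem (rootReflection_mem_weylGroup hα) hw,
      fun x => ?_, fun x hx => ?_⟩
    · rw [LinearEquiv.mul_apply, modTwoPairing_rootReflection, sub_right_comm]
      exact sub_mem (span_mono (Set.subset_insert _ _) (hmove x))
        (smul_mem _ _ (subset_span (Set.mem_insert _ _)))
    rw [LinearEquiv.mul_apply, modTwoPairing_rootReflection, sub_eq_iff_eq_add',
      ← sub_eq_iff_eq_add] at hx
    have hc : (B (w x) α : ZMod 2) = 0 := by
      by_contra hc
      exact hdep ((smul_mem_iff _ hc).mp (hx ▸ hmove x))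
    have hwx : modTwoPairing B (w x) = modTwoPairing B x := by
      rwa [hc, zero_smul, sub_eq_zero] at hx
    have hαx : modTwoPairing B α x = 0 := by
      rw [modTwoPairing_apply, hsym, ← modTwoPairing_apply, ← hwx, modTwoPairing_apply, hc]
    intro f hf
    obtain ⟨a, g, hg, rfl⟩ := mem_span_insert.mp hf
    simp [hαx, hfix x hwx g hg]

end

theorem exists_weyl_element_no_nonzero_fixed_point_on_NL_general
    (L : Type*) [AddCommGroup L] [Module.Finite ℤ L]
    (B : L →ₗ[ℤ] L →ₗ[ℤ] ℤ)
    (hsym : ∀ x y : L, B x y = B y x)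
    (hspan : Submodule.span ℤ {α : L | B α α = 2} = ⊤) :
    ∃ w ∈ WeylGroup B, ∀ x : L,
      modTwoPairing B (w x) = modTwoPairing B x → modTwoPairing B x = 0 := by
  obtain ⟨T, hT, hTspan⟩ :=
    (fg_span_iff_fg_span_finset_subset _).mp (hspan ▸ Module.Finite.fg_top)
  obtain ⟨w, hw, -, hfix⟩ := exists_mem_weylGroup_annihilates_fixed_points hsym T hT
  refine ⟨w, hw, fun x hx => ?_⟩
  ext y
  have hy : y ∈ span ℤ (T : Set L) := by simp [← hTspan, hspan]
  simpa [hsym] using hfix x hx _ (modTwoPairing_mem_span_image hy)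

/-- For an irreducible simply-laced root lattice not of type `A₁`, there is an
element `w` of the Weyl group with no nonzero fixed point on
`N_L = image(L/2L → L^∨/2L^∨)`, i.e. `N_L^w = 0`. -/
theorem exists_weyl_element_no_nonzero_fixed_point_on_NL
    (L : Type*) [AddCommGroup L] [Module.Free ℤ L] [Module.Finite ℤ L]
    (B : L →ₗ[ℤ] L →ₗ[ℤ] ℤ)
    (hsym : ∀ x y : L, B x y = B y x)
    (hpos : ∀ x : L, x ≠ 0 → 0 < B x x)
    (heven : ∀ x : L, 2 ∣ B x x)
    (hspan : Submodule.span ℤ {α : L | B α α = 2} = ⊤)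
    (hirr : ¬ ∃ S : Set L, S ⊆ {α : L | B α α = 2} ∧ S.Nonempty ∧
      ({α : L | B α α = 2} \ S).Nonempty ∧
      ∀ α ∈ S, ∀ β ∈ ({α : L | B α α = 2} \ S), B α β = 0)
    (hrank : 2 ≤ Module.finrank ℤ L) :
    ∃ w ∈ WeylGroup B, ∀ x : L,
      modTwoPairing B (w x) = modTwoPairing B x → modTwoPairing B x = 0 :=
  exists_weyl_element_no_nonzero_fixed_point_on_NL_general L B hsym hspan
end

section
/- Let K be a commutative ring, n ≥ 1, and A an n×n matrix over K. Let D be the (2n)×(2n) block matrix D = [[0, A], [−Aᵀ, 0]]. Then the characteristic polynomial of D satisfies χ_D(X) = det(X² I_n + A Aᵀ); equivalently, χ_D(X) = χ_{−AAᵀ}(X²). -/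
open Polynomial Matrix

/-- For an `n × n` matrix `A` over a commutative ring, the block matrix
`D = [[0, A], [-Aᵀ, 0]]` has characteristic polynomial
`χ_D(X) = det(X² Iₙ + A Aᵀ)`, equivalently `χ_D(X) = χ_{-AAᵀ}(X²)`. -/
theorem charpoly_fromBlocks_skew
    (K : Type*) [CommRing K] (n : ℕ) (hn : 1 ≤ n)
    (A : Matrix (Fin n) (Fin n) K) :
    (Matrix.fromBlocks 0 A (-Aᵀ) 0).charpoly =
      ((Polynomial.X ^ 2 : K[X]) • (1 : Matrix (Fin n) (Fin n) K[X]) +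
        (A * Aᵀ).map Polynomial.C).det ∧
    (Matrix.fromBlocks 0 A (-Aᵀ) 0).charpoly =
      (Matrix.charpoly (-(A * Aᵀ))).comp (Polynomial.X ^ 2) := by
  set B : Matrix (Fin n) (Fin n) K[X] := A.map C with hB
  have hchar : charmatrix (Matrix.fromBlocks 0 A (-Aᵀ) 0) =
      Matrix.fromBlocks ((X : K[X]) • 1) (-B) (Bᵀ) ((X : K[X]) • 1) := by
    ext i j
    cases i <;> cases j <;>
      simp [charmatrix, B, Matrix.fromBlocks, diagonal, Matrix.one_apply, apply_ite C,
        Fin.ext_iff]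
  have key : charmatrix (Matrix.fromBlocks 0 A (-Aᵀ) 0) *
      Matrix.fromBlocks ((X : K[X]) • 1) 0 (-Bᵀ) 1 =
      Matrix.fromBlocks ((X ^ 2 : K[X]) • 1 + B * Bᵀ) (-B) 0 ((X : K[X]) • 1) := by
    rw [hchar, Matrix.fromBlocks_multiply]
    congr 1 <;>
      simp [Matrix.smul_mul, Matrix.mul_smul, smul_smul, pow_two, mul_comm, add_comm]
  have hdetN : (Matrix.fromBlocks ((X : K[X]) • 1) 0 (-Bᵀ)
      (1 : Matrix (Fin n) (Fin n) K[X])).det = X ^ n := by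
    rw [Matrix.det_fromBlocks_zero₁₂]
    simp
  have hdetR : (Matrix.fromBlocks ((X ^ 2 : K[X]) • 1 + B * Bᵀ) (-B) 0
      ((X : K[X]) • 1)).det = ((X ^ 2 : K[X]) • 1 + B * Bᵀ).det * X ^ n := by
    rw [Matrix.det_fromBlocks_zero₂₁]
    simp
  have hmul := congrArg Matrix.det key
  rw [Matrix.det_mul, hdetN, hdetR] at hmul
  have hBB : B * Bᵀ = (A * Aᵀ).map C := by
    simp [B, Matrix.map_mul, Matrix.transpose_map]
  have h1 : (Matrix.fromBlocks 0 A (-Aᵀ) 0).charpoly =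
      ((X ^ 2 : K[X]) • (1 : Matrix (Fin n) (Fin n) K[X]) + (A * Aᵀ).map C).det := by
    have hreg : IsLeftRegular ((X : K[X]) ^ n) := (monic_X.pow n).isRegular.left
    apply hreg
    rw [← hBB]
    simpa [Matrix.charpoly, mul_comm] using hmul
  refine ⟨h1, ?_⟩
  rw [h1]
  have h2 : (Matrix.charpoly (-(A * Aᵀ))).comp (X ^ 2) =
      ((charmatrix (-(A * Aᵀ))).map (eval₂RingHom C (X ^ 2) : K[X] →+* K[X])).det := by
    rw [Matrix.charpoly]
    show (eval₂RingHom C (X ^ 2) : K[X] →+* K[X]) (charmatrix (-(A * Aᵀ))).det = _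
    rw [RingHom.map_det, RingHom.mapMatrix_apply]
  rw [h2, ← hBB]
  congr 1
  have hBB' : ∀ i j, (B * Bᵀ) i j = C ((A * Aᵀ) i j) := fun i j => by rw [hBB, Matrix.map_apply]
  ext i j
  by_cases h : i = j <;>
    simp [charmatrix, h, diagonal, Matrix.one_apply, hBB', coe_eval₂RingHom,
      eval₂_sub, eval₂_X, eval₂_C, sub_neg_eq_add]
end

section
/- Let K be a field of characteristic 0, let g ∈ K[X] be a monic polynomial of degree n ≥ 1 and set f(X) = g(X²), a monic polynomial of degree 2n. Then disc(f) = (−1)ⁿ · 4ⁿ · g(0) · disc(g)², where disc denotes the discriminant of a monic polynomial (the product of (r_i − r_j)² over all unordered pairs of roots r_i, r_j in an algebraic closure, counted with multiplicity). -/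
/-!
For monic split `p` of degree `m`, `disc p = (-1) ^ (m choose 2) * ∏_{p(r) = 0} p'(r)`,
since `∏_{j ≠ i} (r_i - r_j) = p'(r_i)`. The roots of `f = g(X²)` are `±√a` for the roots `a`
of `g`, and `f'(±√a) = ±2√a g'(a)`, so each pair contributes `-4 a g'(a)²` to `∏ f'(r)`.
Finally `∏ a = (-1)ⁿ g(0)` and `(2n choose 2) ≡ n (mod 2)`.
-/

open Polynomial

/-- `∏_{i<j} (l_i - l_j)²` over the entries of a list. -/
noncomputable def pairSquareProd {F : Type*} [Field F] (l : List F) : F :=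
  ∏ q ∈ Finset.univ.filter (fun q : Fin l.length × Fin l.length => q.1 < q.2),
    (l.get q.1 - l.get q.2) ^ 2

/-- The discriminant of a polynomial over an algebraically closed field:
the product of `(r_i - r_j)²` over all unordered pairs of its roots
(counted with multiplicity). -/
noncomputable def discOf {F : Type*} [Field F] (p : F[X]) : F :=
  pairSquareProd p.roots.toList

open Finset

section PairProducts

variable {R : Type*} [CommRing R] {ι : Type*} [Fintype ι]

theorem prod_offDiag_sub_eq_neg_one_pow_mul_prod_sq [LinearOrder ι] (v : ι → R) :
    ∏ q ∈ univ.offDiag, (v q.1 - v q.2) =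
      (-1) ^ (Fintype.card ι).choose 2 * ∏ q : ι × ι with q.1 < q.2, (v q.1 - v q.2) ^ 2 := by
  have hlt :
      {q ∈ (univ : Finset ι).offDiag | q.1 < q.2} = ({q | q.1 < q.2} : Finset (ι × ι)) := by
    ext q
    simpa using ne_of_lt
  have hgt : ∏ q ∈ (univ : Finset ι).offDiag with ¬q.1 < q.2, (v q.1 - v q.2) =
      ∏ q : ι × ι with q.1 < q.2, (v q.2 - v q.1) :=
    prod_nbij' Prod.swap Prod.swap (by grind) (by grind) (by simp) (by simp) (by simp)
  rw [← prod_filter_mul_prod_filter_not _ (fun q => q.1 < q.2), hlt, hgt,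
    ← Fintype.card_product_filter_lt, ← prod_const, ← prod_mul_distrib, ← prod_mul_distrib]
  exact prod_congr rfl fun q _ => by ring

theorem prod_offDiag_sub_eq_prod_eval_derivative_nodal [DecidableEq ι] (v : ι → R) :
    ∏ q ∈ univ.offDiag, (v q.1 - v q.2) =
      ∏ i, (derivative (Lagrange.nodal univ v)).eval (v i) := by
  have hoff : univ.offDiag = ({q | q.1 ≠ q.2} : Finset (ι × ι)) := by ext; simp
  rw [hoff, prod_filter, Fintype.prod_prod_type]
  refine prod_congr rfl fun i _ => ?_
  rw [Lagrange.eval_nodal_derivative_eval_node_eq (mem_univ i), Lagrange.eval_nodal,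
    ← prod_filter, filter_ne]

end PairProducts

theorem neg_one_pow_two_mul_choose_two {R : Type*} [Ring R] (n : ℕ) :
    (-1 : R) ^ (2 * n).choose 2 = (-1) ^ n := by
  have h : (2 * n).choose 2 + n = 2 * (n * n) := by
    rw [Nat.choose_two_right]
    rcases n with _ | n
    · rfl
    rw [show 2 * (n + 1) - 1 = 2 * n + 1 by omega, Nat.mul_assoc, Nat.mul_div_cancel_left _ two_pos]
    ring
  rw [neg_one_pow_eq_pow_mod_two, neg_one_pow_eq_pow_mod_two n]
  congr 1
  omega

section Discriminant

variable {F : Type*} [Field F]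

theorem pairSquareProd_eq_prod_eval_derivative (l : List F) :
    pairSquareProd l = (-1) ^ l.length.choose 2 *
      (l.map fun r => (derivative (l.map (X - C ·)).prod).eval r).prod := by
  have hnodal : Lagrange.nodal univ l.get = (l.map (X - C ·)).prod := by
    rw [Lagrange.nodal_eq]
    exact Fin.prod_univ_fun_getElem l (X - C ·)
  calc pairSquareProd l
      = (-1) ^ l.length.choose 2 * ∏ q ∈ univ.offDiag, (l.get q.1 - l.get q.2) := by
        rw [prod_offDiag_sub_eq_neg_one_pow_mul_prod_sq, Fintype.card_fin, ← mul_assoc,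
          ← mul_pow, neg_one_mul, neg_neg, one_pow, one_mul, pairSquareProd]
    _ = _ := by
        rw [prod_offDiag_sub_eq_prod_eval_derivative_nodal, hnodal]
        exact congrArg _
          (Fin.prod_univ_fun_getElem l fun r => (derivative (l.map (X - C ·)).prod).eval r)

theorem discOf_multiset_prod_X_sub_C (s : Multiset F) :
    discOf (s.map (X - C ·)).prod = (-1) ^ s.card.choose 2 *
      (s.map fun r => (derivative (s.map (X - C ·)).prod).eval r).prod := by
  rw [discOf, roots_multiset_prod_X_sub_C, pairSquareProd_eq_prod_eval_derivative,
    Multiset.length_toList, Multiset.prod_map_toList, Multiset.prod_map_toList]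

theorem Polynomial.Splits.discOf_eq {p : F[X]} (hs : p.Splits) (hp : p.Monic) :
    discOf p = (-1) ^ p.natDegree.choose 2 * (p.roots.map fun r => p.derivative.eval r).prod := by
  have := discOf_multiset_prod_X_sub_C p.roots
  rwa [← hs.eq_prod_roots_of_monic hp, ← hs.natDegree_eq_card_roots] at this

end Discriminant

theorem eval_derivative_comp_X_sq {R : Type*} [CommRing R] (G : R[X]) (r : R) :
    (derivative (G.comp (X ^ 2))).eval r = 2 * r * G.derivative.eval (r ^ 2) := by
  simp only [derivative_comp, eval_mul, eval_comp, derivative_X_pow, eval_C, eval_pow, eval_X]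
  ring

section CompXSq

variable {A : Type*} [Field A] {G : A[X]} {t : A → A}

theorem Polynomial.Splits.comp_X_sq_eq_prod_X_sub_C (hs : G.Splits) (hG : G.Monic)
    (ht : ∀ a ∈ G.roots, a = t a * t a) :
    G.comp (X ^ 2) = ((G.roots.bind fun a => {t a, -t a}).map (X - C ·)).prod := by
  conv_lhs => rw [hs.eq_prod_roots_of_monic hG]
  rw [multiset_prod_comp, Multiset.map_map, Multiset.map_bind, Multiset.prod_bind]
  refine congrArg _ (Multiset.map_congr rfl fun a ha => ?_)
  simp only [Function.comp_apply, sub_comp, X_comp, C_comp, Multiset.insert_eq_cons,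
    Multiset.map_cons, Multiset.map_singleton, Multiset.prod_cons, Multiset.prod_singleton]
  conv_lhs => rw [ht a ha]
  rw [map_mul, map_neg]
  ring

theorem prod_eval_derivative_comp_X_sq (hs : G.Splits) (ht : ∀ a ∈ G.roots, a = t a * t a) :
    ((G.roots.bind fun a => {t a, -t a}).map fun r => (derivative (G.comp (X ^ 2))).eval r).prod =
      (-4) ^ G.natDegree * G.roots.prod * (G.roots.map fun a => G.derivative.eval a).prod ^ 2 := by
  have hpair : ∀ a ∈ G.roots, (({t a, -t a} : Multiset A).map fun r =>
      (derivative (G.comp (X ^ 2))).eval r).prod = -4 * a * G.derivative.eval a ^ 2 := by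
    intro a ha
    simp only [Multiset.insert_eq_cons, Multiset.map_cons, Multiset.map_singleton,
      Multiset.prod_cons, Multiset.prod_singleton, eval_derivative_comp_X_sq, neg_sq, sq (t a),
      ← ht a ha]
    linear_combination 4 * G.derivative.eval a ^ 2 * ht a ha
  rw [Multiset.map_bind, Multiset.prod_bind, Multiset.map_congr rfl hpair, Multiset.prod_map_mul,
    Multiset.prod_map_mul, Multiset.map_const', Multiset.prod_replicate, Multiset.map_id',
    Multiset.prod_map_pow, ← hs.natDegree_eq_card_roots]

theorem discOf_comp_X_sq (hs : G.Splits) (hG : G.Monic) (hsq : ∀ a ∈ G.roots, IsSquare a) :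
    discOf (G.comp (X ^ 2)) =
      (-1) ^ G.natDegree * 4 ^ G.natDegree * G.eval 0 * discOf G ^ 2 := by
  choose! t ht using hsq
  have hcomp := hs.comp_X_sq_eq_prod_X_sub_C hG ht
  have hcard : (G.roots.bind fun a => {t a, -t a}).card = 2 * G.natDegree := by
    simp [hs.natDegree_eq_card_roots, two_mul]
  have hG0 : G.eval 0 = (-1) ^ G.natDegree * G.roots.prod := by
    rw [← coeff_zero_eq_eval_zero, hs.coeff_zero_eq_prod_roots_of_monic hG]
  have hsign : ((-1 : A) ^ G.natDegree.choose 2) ^ 2 = 1 := by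
    rw [← pow_mul, mul_comm, pow_mul, neg_one_sq, one_pow]
  rw [hcomp, discOf_multiset_prod_X_sub_C, ← hcomp, hcard, prod_eval_derivative_comp_X_sq hs ht,
    neg_one_pow_two_mul_choose_two, hs.discOf_eq hG, hG0, mul_pow, hsign, neg_pow (4 : A)]
  ring

end CompXSq

theorem disc_comp_X_sq_general
    (K : Type*) [Field K] (g : K[X]) (hg : g.Monic)
    (n : ℕ) (hdeg : g.natDegree = n) :
    discOf ((g.comp (Polynomial.X ^ 2)).map (algebraMap K (AlgebraicClosure K))) =
      (-1) ^ n * 4 ^ n * (algebraMap K (AlgebraicClosure K) (g.eval 0)) *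
        (discOf (g.map (algebraMap K (AlgebraicClosure K)))) ^ 2 := by
  rw [Polynomial.map_comp, Polynomial.map_pow, map_X,
    discOf_comp_X_sq (IsAlgClosed.splits _) (hg.map _) fun a _ => IsAlgClosed.exists_eq_mul_self a,
    hg.natDegree_map, hdeg, eval_zero_map]

/-- If `g` is monic of degree `n ≥ 1` over a field `K` of characteristic zero and
`f(X) = g(X²)`, then `disc(f) = (-1)ⁿ · 4ⁿ · g(0) · disc(g)²` (computed via the
roots in an algebraic closure of `K`). -/
theorem disc_comp_X_sq
    (K : Type*) [Field K] [CharZero K] (g : K[X]) (hg : g.Monic)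
    (n : ℕ) (hn : 1 ≤ n) (hdeg : g.natDegree = n) :
    discOf ((g.comp (Polynomial.X ^ 2)).map (algebraMap K (AlgebraicClosure K))) =
      (-1) ^ n * 4 ^ n * (algebraMap K (AlgebraicClosure K) (g.eval 0)) *
        (discOf (g.map (algebraMap K (AlgebraicClosure K)))) ^ 2 :=
  disc_comp_X_sq_general K g hg n hdeg
end

section
/- Let K be a field of characteristic 0, n ≥ 1, and A an n×n matrix over K. Let D = [[0, A], [−Aᵀ, 0]] be the associated (2n)×(2n) block matrix. Then the characteristic polynomial of D is separable if and only if the characteristic polynomial of A Aᵀ is separable and det(A) ≠ 0. -/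
/-!
Eliminating the off-diagonal blocks of `X • 1 - D` against its scalar diagonal blocks
gives `χ_D(X) = χ_{-AAᵀ}(X²)`. Since `(p(X²))' = 2X · p'(X²)`, the polynomial `p(X²)` is
separable exactly when `p` is separable and `p(0) ≠ 0`. Finally `χ_{-M}(X) = ±χ_M(-X)` is
separable iff `χ_M` is, and `χ_{-AAᵀ}(0) = det (AAᵀ) = det A ^ 2`.
-/

open Matrix Polynomial

namespace Polynomial

section Expand

variable {K : Type*} [Field K]

theorem isCoprime_expand_iff {n : ℕ} (hn : 0 < n) {f g : K[X]} :
    IsCoprime (expand K n f) (expand K n g) ↔ IsCoprime f g := by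
  refine ⟨fun h => ?_, fun h => h.map (expand K n).toRingHom⟩
  refine isCoprime_of_dvd f g (fun ⟨hf, hg⟩ => ?_) fun d hd _ hdf hdg => ?_
  · simp only [hf, hg, map_zero, isCoprime_zero_left, isUnit_zero_iff, zero_ne_one] at h
  · exact hd ((isLocalHom_expand K hn).map_nonunit d
      (h.isUnit_of_dvd' (_root_.map_dvd (expand K n) hdf) (_root_.map_dvd (expand K n) hdg)))

theorem separable_expand_iff {n : ℕ} (hn : 2 ≤ n) (hnK : (n : K) ≠ 0) {f : K[X]} :
    (expand K n f).Separable ↔ f.Separable ∧ f.coeff 0 ≠ 0 := by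
  have hn0 : 0 < n := by omega
  have hcoprime_X : IsCoprime (expand K n f) X ↔ f.coeff 0 ≠ 0 := by
    rw [isCoprime_comm, irreducible_X.coprime_iff_not_dvd, X_dvd_iff,
      coeff_expand hn0, if_pos (dvd_zero n), Nat.zero_div]
  have hunit : IsUnit (n : K[X]) := by
    rw [← C_eq_natCast, isUnit_C]
    exact hnK.isUnit
  rw [separable_def, separable_def, derivative_expand]
  constructor
  · intro h
    refine ⟨(isCoprime_expand_iff hn0).1 h.of_mul_right_left,
      hcoprime_X.1 (h.of_isCoprime_of_dvd_right ?_)⟩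
    exact ((dvd_pow_self X (by omega)).mul_left _).mul_left _
  · rintro ⟨hf, h0⟩
    exact ((isCoprime_expand_iff hn0).2 hf).mul_right <|
      (isCoprime_mul_unit_left_right hunit _ _).2 (hcoprime_X.2 h0).pow_right

end Expand

section CompNegX

variable {R : Type*} [CommRing R]

theorem Separable.comp_neg_X {p : R[X]} (h : p.Separable) : (p.comp (-X)).Separable := by
  rw [separable_def, derivative_comp, derivative_neg, derivative_X, neg_one_mul]
  exact (IsCoprime.map h (compRingHom (-X))).neg_right

theorem separable_comp_neg_X_iff {p : R[X]} : (p.comp (-X)).Separable ↔ p.Separable :=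
  ⟨fun h => by simpa only [comp_neg_X_comp_neg_X] using h.comp_neg_X, Separable.comp_neg_X⟩

end CompNegX

end Polynomial

namespace Matrix

variable {R : Type*} [CommRing R] {m : Type*} [Fintype m] [DecidableEq m]

theorem det_fromBlocks_scalar_scalar {r : R} (hr : IsLeftRegular r) (B C : Matrix m m R) :
    (fromBlocks (scalar m r) B C (scalar m r)).det = (scalar m (r ^ 2) - B * C).det := by
  -- Multiplying on the left by `[[r, -B], [0, r]]` makes the matrix block lower triangular;
  -- the extra factor `r ^ (2 * card m)` is then cancelled.
  have hprod :
      fromBlocks (scalar m r) (-B) 0 (scalar m r) * fromBlocks (scalar m r) B C (scalar m r) =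
        fromBlocks (scalar m (r ^ 2) - B * C) 0 (scalar m r * C) (scalar m (r ^ 2)) := by
    simp only [fromBlocks_multiply, map_pow, ← sq, Matrix.neg_mul, ← sub_eq_add_neg,
      (scalar_commute r (Commute.all r) B).eq, sub_self, Matrix.zero_mul, zero_add]
  have hdet : ∀ s : R, (scalar m s).det = s ^ Fintype.card m := by simp
  have hprod_det := congrArg det hprod
  rw [det_mul, det_fromBlocks_zero₂₁, det_fromBlocks_zero₁₂, hdet, hdet, ← pow_mul, ← pow_add,
    ← two_mul, mul_comm ((scalar m (r ^ 2) - B * C).det)] at hprod_det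
  exact (hr.pow (2 * Fintype.card m)) hprod_det

theorem charpoly_comp (M : Matrix m m R) (p : R[X]) :
    M.charpoly.comp p = (scalar m p - M.map C).det := by
  rw [charpoly, ← coe_compRingHom_apply, RingHom.map_det]
  congr 1
  ext i j
  by_cases h : i = j <;> simp [h]

theorem charpoly_neg (M : Matrix m m R) :
    (-M).charpoly = (-1) ^ Fintype.card m * M.charpoly.comp (-X) := by
  have h : scalar m (-X) - M.map C = -charmatrix (-M) := by
    rw [charmatrix, map_neg, map_neg, RingHom.mapMatrix_apply, sub_neg_eq_add, neg_add']
  rw [charpoly_comp, h, det_neg, charpoly, ← mul_assoc, ← mul_pow, neg_one_mul, neg_neg, one_pow,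
    one_mul]

theorem separable_charpoly_neg_iff (M : Matrix m m R) :
    (-M).charpoly.Separable ↔ M.charpoly.Separable := by
  have hunit : IsUnit ((-1 : R[X]) ^ Fintype.card m) := isUnit_neg_one.pow _
  rw [charpoly_neg, (associated_unit_mul_left _ _ hunit).separable_iff, separable_comp_neg_X_iff]

theorem charpoly_coeff_zero_eq_zero_iff (M : Matrix m m R) :
    M.charpoly.coeff 0 = 0 ↔ M.det = 0 := by
  rw [det_eq_sign_charpoly_coeff, ((isUnit_neg_one (α := R)).pow _).mul_right_eq_zero]

theorem charpoly_fromBlocks_zero₁₁_zero₂₂ (B C : Matrix m m R) :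
    (fromBlocks 0 B C 0).charpoly = expand R 2 (B * C).charpoly := by
  rw [charpoly, charmatrix_fromBlocks, expand_eq_comp_X_pow, charpoly_comp, charmatrix_zero,
    det_fromBlocks_scalar_scalar isRegular_X.left, neg_mul_neg, Matrix.map_mul]

end Matrix

theorem charpoly_fromBlocks_skew_separable_iff_general
    (K : Type*) [Field K] [CharZero K] (n : ℕ)
    (A : Matrix (Fin n) (Fin n) K) :
    (Matrix.fromBlocks 0 A (-Aᵀ) 0).charpoly.Separable ↔
      (A * Aᵀ).charpoly.Separable ∧ A.det ≠ 0 := by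
  rw [charpoly_fromBlocks_zero₁₁_zero₂₂, separable_expand_iff le_rfl (by norm_num),
    Matrix.mul_neg, separable_charpoly_neg_iff, ne_eq, charpoly_coeff_zero_eq_zero_iff, det_neg,
    det_mul, det_transpose]
  simp

/-- For an `n × n` matrix `A` over a field of characteristic zero, the
characteristic polynomial of the block matrix `D = [[0, A], [-Aᵀ, 0]]` is
separable if and only if the characteristic polynomial of `A Aᵀ` is separable
and `det A ≠ 0`. -/
theorem charpoly_fromBlocks_skew_separable_iff
    (K : Type*) [Field K] [CharZero K] (n : ℕ) (hn : 1 ≤ n)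
    (A : Matrix (Fin n) (Fin n) K) :
    (Matrix.fromBlocks 0 A (-Aᵀ) 0).charpoly.Separable ↔
      (A * Aᵀ).charpoly.Separable ∧ A.det ≠ 0 :=
  charpoly_fromBlocks_skew_separable_iff_general K n A
end
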